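/- arXiv:0910.3578 — 3 statements merged into one kernel-verified Lean document; each statement's English description precedes it below -/
import Mathlib

section
/- Let a, b ∈ ℂ with a ≠ 0 and b ∈ ℝ, and let d(w) = conj(a) w² + 2 b w + a. Then both roots of d lie on the unit circle |w| = 1 if and only if |a| ≥ |b|; and if |a| < |b| then exactly one root satisfies |w| < 1 and the other satisfies |w| > 1. -/
open Complex ComplexConjugate

/-! Multiplying `d(w) = 0` by `conj a` turns it into `u² + 2bu + |a|² = 0` for `u = conj(a)·w`,
a quadratic with real coefficients. When `b² ≤ |a|²` its roots are `-b ± i·√(|a|² - b²)`,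
of modulus `|a|`, so `|w| = 1`. Conversely, by Vieta `|w₁ w₂| = 1` and `|a|·|w₁ + w₂| = 2|b|`,
so roots on the unit circle force `|b| ≤ |a|`, and otherwise one root lies inside the circle and
the other outside. -/

theorem vieta_of_forall_quadratic_eq {R : Type*} [CommRing R] {p q r x₁ x₂ : R}
    (h : ∀ x : R, p * x ^ 2 + q * x + r = p * (x - x₁) * (x - x₂)) :
    p * (x₁ * x₂) = r ∧ p * (x₁ + x₂) = -q := by
  have h₀ := h 0
  have h₁ := h 1
  exact ⟨by linear_combination -h₀, by linear_combination h₁ - h₀⟩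

theorem Complex.sq_norm_eq_of_quadratic_eq_zero {u : ℂ} {b c : ℝ}
    (hu : u ^ 2 + 2 * b * u + c = 0) (hbc : b ^ 2 ≤ c) : ‖u‖ ^ 2 = c := by
  have hsq : (u + b) ^ 2 = ((b ^ 2 - c : ℝ) : ℂ) := by
    push_cast
    linear_combination hu
  have hre := congrArg re hsq
  have him := congrArg im hsq
  simp only [sq, mul_re, mul_im, add_re, add_im, ofReal_re, ofReal_im] at hre him
  have hre_zero : u.re + b = 0 := by
    rcases mul_eq_zero.mp (show (u.re + b) * u.im = 0 by linarith) with h | h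
    · exact h
    · rw [h] at hre
      nlinarith
  have him_sq : u.im ^ 2 = c - b ^ 2 := by
    rw [hre_zero] at hre
    linear_combination -hre
  rw [← normSq_eq_norm_sq, normSq_apply, show u.re = -b by linarith]
  linear_combination him_sq

theorem Complex.norm_eq_one_of_quadratic_eq_zero {a w : ℂ} {b : ℝ} (ha : a ≠ 0)
    (hb : |b| ≤ ‖a‖) (hw : conj a * w ^ 2 + 2 * b * w + a = 0) : ‖w‖ = 1 := by
  have hu : (conj a * w) ^ 2 + 2 * b * (conj a * w) + (normSq a : ℂ) = 0 := by
    rw [← mul_conj]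
    linear_combination conj a * hw
  have hbc : b ^ 2 ≤ normSq a := by
    rw [normSq_eq_norm_sq]
    exact sq_le_sq' (abs_le.mp hb).1 (abs_le.mp hb).2
  have hnorm := sq_norm_eq_of_quadratic_eq_zero hu hbc
  rw [norm_mul, norm_conj, normSq_eq_norm_sq, mul_pow] at hnorm
  have ha' : ‖a‖ ^ 2 ≠ 0 := by positivity
  have hw2 : ‖w‖ ^ 2 = 1 := by
    apply mul_left_cancel₀ ha'
    linear_combination hnorm
  exact (pow_eq_one_iff_of_nonneg (norm_nonneg w) two_ne_zero).mp hw2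

/-- for a ≠ 0 and real b, with w₁, w₂ the roots of
d(w) = conj(a)·w² + 2·b·w + a: both roots lie on the unit circle iff |a| ≥ |b|;
if |a| < |b| then exactly one root is inside and the other outside the unit circle. -/
theorem stmt3 (a : ℂ) (b : ℝ) (ha : a ≠ 0) (w₁ w₂ : ℂ)
    (hroots : ∀ w : ℂ,
      conj a * w ^ 2 + 2 * (b : ℂ) * w + a = conj a * (w - w₁) * (w - w₂)) :
    ((‖w₁‖ = 1 ∧ ‖w₂‖ = 1) ↔ |b| ≤ ‖a‖) ∧
    (‖a‖ < |b| →
      (‖w₁‖ < 1 ∧ 1 < ‖w₂‖) ∨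
      (1 < ‖w₁‖ ∧ ‖w₂‖ < 1)) := by
  obtain ⟨hprod, hsum⟩ := vieta_of_forall_quadratic_eq hroots
  have hna : 0 < ‖a‖ := norm_pos_iff.mpr ha
  have hnorm_prod : ‖w₁‖ * ‖w₂‖ = 1 := by
    have h := congrArg norm hprod
    rw [norm_mul, norm_mul, norm_conj] at h
    exact mul_left_cancel₀ hna.ne' (by rw [h, mul_one])
  have hnorm_sum : ‖a‖ * ‖w₁ + w₂‖ = 2 * |b| := by
    simpa [norm_mul, abs_mul] using congrArg norm hsum
  have hunit : (‖w₁‖ = 1 ∧ ‖w₂‖ = 1) ↔ |b| ≤ ‖a‖ := by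
    refine ⟨fun ⟨h₁, h₂⟩ => ?_, fun hb => ?_⟩
    · nlinarith [norm_add_le w₁ w₂]
    · exact ⟨norm_eq_one_of_quadratic_eq_zero ha hb (by simpa using hroots w₁),
        norm_eq_one_of_quadratic_eq_zero ha hb (by simpa using hroots w₂)⟩
  refine ⟨hunit, fun hlt => ?_⟩
  have hne : ‖w₁‖ ≠ 1 := fun h₁ =>
    hlt.not_ge (hunit.mp ⟨h₁, by simpa [h₁] using hnorm_prod⟩)
  rcases hne.lt_or_gt with h | h
  · exact .inl ⟨h, by nlinarith [norm_nonneg w₁]⟩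
  · exact .inr ⟨h, by nlinarith [norm_nonneg w₂]⟩
end

section
/- Let Ω ⊆ ℂ be open and connected, and f polyanalytic of order ν on Ω (∂^{ν+1} f/∂z̄^{ν+1} = 0). Then there exist functions h₀, …, h_ν holomorphic on Ω such that f(z) = h₀(z) + conj(z)·h₁(z) + ⋯ + conj(z)^ν · h_ν(z) for all z ∈ Ω. -/
/-!
Induction on the order. If `∂f/∂z̄ = ∑_{j<n} z̄ʲ hⱼ` with `hⱼ` holomorphic, then
`F = ∑_{j<n} z̄ʲ⁺¹ hⱼ / (j + 1)` has the same `∂/∂z̄`-derivative, since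
`∂(z̄ʲ⁺¹ h)/∂z̄ = (j + 1) z̄ʲ h` for holomorphic `h`. Hence `∂(f - F)/∂z̄ = 0`, so `f - F`
is holomorphic by the Cauchy–Riemann equations, and `f = (f - F) + F` is the required
expansion with one more term.
-/

open Complex ComplexConjugate

/-- The Wirtinger derivative ∂/∂z̄ = ½(∂/∂x + i∂/∂y). -/
noncomputable def wbar (f : ℂ → ℂ) : ℂ → ℂ := fun z =>
  (fderiv ℝ f z 1 + Complex.I * fderiv ℝ f z Complex.I) / 2

open Finset

section Wirtinger

variable {f g : ℂ → ℂ} {z : ℂ}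

theorem wbar_eq_zero_iff : wbar f z = 0 ↔ fderiv ℝ f z I = I • fderiv ℝ f z 1 := by
  rw [wbar, smul_eq_mul, div_eq_zero_iff, or_iff_left two_ne_zero]
  constructor <;> intro h
  · linear_combination -I * h + fderiv ℝ f z I * I_sq
  · linear_combination I * h + fderiv ℝ f z 1 * I_sq

theorem differentiableAt_complex_iff_wbar_eq_zero :
    DifferentiableAt ℂ f z ↔ DifferentiableAt ℝ f z ∧ wbar f z = 0 := by
  rw [differentiableAt_complex_iff_differentiableAt_real, wbar_eq_zero_iff]

theorem wbar_sub (hf : DifferentiableAt ℝ f z) (hg : DifferentiableAt ℝ g z) :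
    wbar (fun w => f w - g w) z = wbar f z - wbar g z := by
  simp only [wbar, fderiv_fun_sub hf hg, sub_apply]
  ring

theorem wbar_mul (hf : DifferentiableAt ℝ f z) (hg : DifferentiableAt ℝ g z) :
    wbar (fun w => f w * g w) z = wbar f z * g z + f z * wbar g z := by
  simp only [wbar, fderiv_fun_mul hf hg, add_apply, smul_apply, smul_eq_mul]
  ring

theorem wbar_pow (hf : DifferentiableAt ℝ f z) (n : ℕ) :
    wbar (fun w => f w ^ n) z = n * f z ^ (n - 1) * wbar f z := by
  simp only [wbar, fderiv_fun_pow n hf, smul_apply, smul_eq_mul, nsmul_eq_mul]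
  ring

theorem wbar_sum {ι : Type*} {s : Finset ι} {f : ι → ℂ → ℂ}
    (hf : ∀ i ∈ s, DifferentiableAt ℝ (f i) z) :
    wbar (fun w => ∑ i ∈ s, f i w) z = ∑ i ∈ s, wbar (f i) z := by
  simp only [wbar, fderiv_fun_sum hf, _root_.sum_apply, mul_sum, ← sum_add_distrib, sum_div]

theorem wbar_conj : wbar (fun w => conj w) z = 1 := by
  rw [wbar, show (fun w => conj w) = conjCLE from funext fun w => (conjCLE_apply w).symm,
    conjCLE.fderiv]
  simp only [ContinuousLinearEquiv.coe_coe, conjCLE_apply, map_one, conj_I, mul_neg, I_mul_I]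
  norm_num

theorem wbar_conj_pow_succ_mul (hg : DifferentiableAt ℂ g z) (n : ℕ) :
    wbar (fun w => conj w ^ (n + 1) * g w) z = (n + 1) * conj z ^ n * g z := by
  have hconj : DifferentiableAt ℝ (fun w => conj w) z := differentiable_conj z
  rw [wbar_mul (f := fun w => conj w ^ (n + 1)) (hconj.pow _) (hg.restrictScalars ℝ),
    wbar_pow hconj, wbar_conj, (differentiableAt_complex_iff_wbar_eq_zero.1 hg).2]
  push_cast
  ring

theorem ContDiffOn.wbar {Ω : Set ℂ} (hΩ : IsOpen Ω) {n : WithTop ℕ∞}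
    (hf : ContDiffOn ℝ (n + 1) f Ω) : ContDiffOn ℝ n (wbar f) Ω := by
  have hd : ContDiffOn ℝ n (fderiv ℝ f) Ω := hf.fderiv_of_isOpen hΩ le_rfl
  exact ((hd.clm_apply contDiffOn_const).add
    (contDiffOn_const.mul (hd.clm_apply contDiffOn_const))).div_const 2

end Wirtinger

def IsConjPolynomialOn (Ω : Set ℂ) (n : ℕ) (f : ℂ → ℂ) : Prop :=
  ∃ h : ℕ → ℂ → ℂ, (∀ j < n, DifferentiableOn ℂ (h j) Ω) ∧
    ∀ z ∈ Ω, f z = ∑ j ∈ range n, conj z ^ j * h j z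

variable {Ω : Set ℂ}

theorem IsConjPolynomialOn.of_wbar (hΩ : IsOpen Ω) {n : ℕ} {f : ℂ → ℂ}
    (hf : DifferentiableOn ℝ f Ω) (hwf : IsConjPolynomialOn Ω n (wbar f)) :
    IsConjPolynomialOn Ω (n + 1) f := by
  obtain ⟨h, hh, hwf⟩ := hwf
  set c : ℕ → ℂ → ℂ := fun j w => ((j : ℂ) + 1)⁻¹ * h j w
  set F : ℂ → ℂ := fun w => ∑ j ∈ range n, conj w ^ (j + 1) * c j w
  have hc : ∀ z ∈ Ω, ∀ j ∈ range n, DifferentiableAt ℂ (c j) z := fun z hz j hj =>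
    ((hh j (mem_range.1 hj)).differentiableAt (hΩ.mem_nhds hz)).const_mul _
  have hFterm : ∀ z ∈ Ω, ∀ j ∈ range n,
      DifferentiableAt ℝ (fun w => conj w ^ (j + 1) * c j w) z := fun z hz j hj =>
    ((differentiable_conj z).pow _).mul ((hc z hz j hj).restrictScalars ℝ)
  have hwF : ∀ z ∈ Ω, wbar F z = wbar f z := by
    intro z hz
    rw [wbar_sum (hFterm z hz), hwf z hz]
    refine sum_congr rfl fun j hj => ?_
    rw [wbar_conj_pow_succ_mul (hc z hz j hj)]
    simp only [c]
    field_simp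
  have hφ : DifferentiableOn ℂ (f - F) Ω := by
    intro z hz
    have hfz := hf.differentiableAt (hΩ.mem_nhds hz)
    have hFz : DifferentiableAt ℝ F z := DifferentiableAt.fun_sum (hFterm z hz)
    refine (differentiableAt_complex_iff_wbar_eq_zero.2
      ⟨hfz.fun_sub hFz, ?_⟩).differentiableWithinAt
    rw [wbar_sub hfz hFz, hwF z hz, sub_self]
  refine ⟨fun j => Nat.casesOn j (f - F) c, fun j hj => ?_, fun z _ => ?_⟩
  · cases j with
    | zero => exact hφ
    | succ j => exact fun z hz => (hc z hz j (mem_range.2 (by omega))).differentiableWithinAt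
  · rw [sum_range_succ']
    simp only [pow_zero, one_mul]
    exact (add_sub_cancel (F z) (f z)).symm

theorem isConjPolynomialOn_of_iterate_wbar_eq_zero (hΩ : IsOpen Ω) (n : ℕ) {f : ℂ → ℂ}
    (hf : ContDiffOn ℝ n f Ω) (hpoly : ∀ z ∈ Ω, (wbar^[n] f) z = 0) :
    IsConjPolynomialOn Ω n f := by
  induction n generalizing f with
  | zero => exact ⟨fun _ => 0, by simp, by simpa using hpoly⟩
  | succ n ih => exact (ih (hf.wbar hΩ) hpoly).of_wbar hΩ (hf.differentiableOn (by simp))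

theorem stmt12_general (Ω : Set ℂ) (hΩ : IsOpen Ω) (ν : ℕ)
    (f : ℂ → ℂ) (hf : ContDiffOn ℝ (ν + 1) f Ω)
    (hpoly : ∀ z ∈ Ω, (wbar^[ν + 1] f) z = 0) :
    ∃ h : ℕ → ℂ → ℂ, (∀ j ≤ ν, DifferentiableOn ℂ (h j) Ω) ∧
      ∀ z ∈ Ω, f z = ∑ j ∈ Finset.range (ν + 1), (conj z) ^ j * h j z := by
  obtain ⟨h, hh, hdecomp⟩ :=
    isConjPolynomialOn_of_iterate_wbar_eq_zero hΩ (ν + 1) (by exact_mod_cast hf) hpoly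
  exact ⟨h, fun j hj => hh j (Nat.lt_succ_of_le hj), hdecomp⟩

/-- a polyanalytic function of order ν on an open connected Ω
decomposes as f(z) = h₀(z) + conj(z)h₁(z) + ⋯ + conj(z)^ν·h_ν(z) with h_j
holomorphic on Ω. -/
theorem stmt12 (Ω : Set ℂ) (hΩ : IsOpen Ω) (hconn : IsConnected Ω) (ν : ℕ)
    (f : ℂ → ℂ) (hf : ContDiffOn ℝ (ν + 1) f Ω)
    (hpoly : ∀ z ∈ Ω, (wbar^[ν + 1] f) z = 0) :
    ∃ h : ℕ → ℂ → ℂ, (∀ j ≤ ν, DifferentiableOn ℂ (h j) Ω) ∧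
      ∀ z ∈ Ω, f z = ∑ j ∈ Finset.range (ν + 1), (conj z) ^ j * h j z :=
  stmt12_general Ω hΩ ν f hf hpoly
end

section
/- Let f(z) = conj(z)·(z − c₁)⋯(z − c_l) for distinct points c₁, …, c_l ∈ ℂ, all nonzero, and fix j ∈ {1,…,l}. For every r > 0, the restriction of f to the circle |z − c_j| = r extends holomorphically to the disc |z − c_j| < r. Yet f is not holomorphic on ℂ (its ∂/∂z̄ derivative is the nonzero polynomial (z − c₁)⋯(z − c_l)). -/
open Complex Metric ComplexConjugate

/-! On the circle `|z - c| = r` one has `conj z = conj c + r² / (z - c)`, so the factor `z - c`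
of `f` absorbs the pole and `f` agrees there with a polynomial. The Wirtinger derivative kills
the holomorphic factor and sees only `conj`, which gives `∂f/∂z̄ = ∏ (z - cᵢ)`; this is nonzero
at `0`, whereas `∂/∂z̄` vanishes on holomorphic functions. -/

lemma ContinuousLinearMap.apply_I_eq_I_mul_apply_one (L : ℂ →L[ℂ] ℂ) : L I = I * L 1 := by
  simpa only [smul_eq_mul, mul_one] using L.map_smul I 1

lemma wbar_eq_zero_of_differentiableAt {f : ℂ → ℂ} {z : ℂ} (hf : DifferentiableAt ℂ f z) :
    wbar f z = 0 := by
  have hreal : fderiv ℝ f z = (fderiv ℂ f z).restrictScalars ℝ :=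
    (hf.hasFDerivAt.restrictScalars ℝ).fderiv
  simp only [wbar, hreal, ContinuousLinearMap.coe_restrictScalars',
    ContinuousLinearMap.apply_I_eq_I_mul_apply_one]
  linear_combination (fderiv ℂ f z 1 / 2) * I_mul_I

lemma wbar_conj_mul {g : ℂ → ℂ} {z : ℂ} (hg : DifferentiableAt ℂ g z) :
    wbar (fun w => conj w * g w) z = g z := by
  have hfd : HasFDerivAt (fun w => conj w * g w)
      (conj z • (fderiv ℂ g z).restrictScalars ℝ + g z • conjCLE.toContinuousLinearMap) z :=
    conjCLE.hasFDerivAt.mul (hg.hasFDerivAt.restrictScalars ℝ)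
  simp only [wbar, hfd.fderiv, add_apply, smul_apply,
    ContinuousLinearMap.coe_restrictScalars', ContinuousLinearEquiv.coe_coe, conjCLE_apply,
    map_one, conj_I, smul_eq_mul, ContinuousLinearMap.apply_I_eq_I_mul_apply_one]
  linear_combination (conj z * fderiv ℂ g z 1 / 2 - g z / 2) * I_mul_I

lemma mul_conj_eq_on_sphere {c z : ℂ} {r : ℝ} (hz : z ∈ sphere c r) :
    (z - c) * conj z = conj c * (z - c) + (r : ℂ) ^ 2 := by
  have hnorm : ‖z - c‖ = r := by rwa [mem_sphere, dist_eq] at hz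
  have hsq : (z - c) * conj (z - c) = (r : ℂ) ^ 2 := by
    rw [mul_conj, normSq_eq_norm_sq, hnorm]
    push_cast
    ring
  rw [map_sub] at hsq
  linear_combination hsq

lemma conj_mul_sub_mul_eqOn_sphere (c : ℂ) (r : ℝ) (g : ℂ → ℂ) :
    Set.EqOn (fun z => conj z * ((z - c) * g z)) (fun z => (conj c * (z - c) + (r : ℂ) ^ 2) * g z)
      (sphere c r) := fun z hz => by
  simp only [← mul_conj_eq_on_sphere hz]
  ring

theorem stmt17_general (l : ℕ) (c : Fin l → ℂ)
    (hne : ∀ i, c i ≠ 0) (f : ℂ → ℂ)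
    (hf : ∀ z, f z = conj z * ∏ i, (z - c i))
    (j : Fin l) (r : ℝ) :
    (∃ F : ℂ → ℂ, DifferentiableOn ℂ F (ball (c j) r) ∧
      ContinuousOn F (closedBall (c j) r) ∧
      ∀ z ∈ sphere (c j) r, F z = f z) ∧
    (∀ z, wbar f z = ∏ i, (z - c i)) ∧
    ¬ Differentiable ℂ f := by
  have hw : ∀ z, wbar f z = ∏ i, (z - c i) := fun z => by
    rw [funext hf]
    exact wbar_conj_mul (by fun_prop)
  set G : ℂ → ℂ := fun z => ∏ i ∈ Finset.univ.erase j, (z - c i)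
  have hsplit : ∀ z, ∏ i, (z - c i) = (z - c j) * G z := fun z =>
    (Finset.mul_prod_erase _ _ (Finset.mem_univ j)).symm
  have hF : Differentiable ℂ fun z => (conj (c j) * (z - c j) + (r : ℂ) ^ 2) * G z := by
    fun_prop
  refine ⟨⟨_, hF.differentiableOn, hF.continuous.continuousOn, fun z hz => ?_⟩, hw, fun hdiff => ?_⟩
  · rw [hf, hsplit]
    exact (conj_mul_sub_mul_eqOn_sphere (c j) r G hz).symm
  · have h0 := wbar_eq_zero_of_differentiableAt (hdiff 0)
    rw [hw] at h0
    exact Finset.prod_ne_zero_iff.mpr (fun i _ => by simpa using hne i) h0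

/-- f(z) = conj(z)(z-c₁)⋯(z-c_l) (c_i distinct, nonzero) extends
holomorphically inside every circle centered at any c_j, yet f is not holomorphic:
∂f/∂z̄ = (z-c₁)⋯(z-c_l) ≠ 0. -/
theorem stmt17 (l : ℕ) (hl : 0 < l) (c : Fin l → ℂ) (hinj : Function.Injective c)
    (hne : ∀ i, c i ≠ 0) (f : ℂ → ℂ)
    (hf : ∀ z, f z = conj z * ∏ i, (z - c i))
    (j : Fin l) (r : ℝ) (hr : 0 < r) :
    (∃ F : ℂ → ℂ, DifferentiableOn ℂ F (ball (c j) r) ∧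
      ContinuousOn F (closedBall (c j) r) ∧
      ∀ z ∈ sphere (c j) r, F z = f z) ∧
    (∀ z, wbar f z = ∏ i, (z - c i)) ∧
    ¬ Differentiable ℂ f :=
  stmt17_general l c hne f hf j r
end
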